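/- Let A₁, A₂ ⊆ E be nonempty compact sets and let λ ≥ 0. Then for every z₀ ∈ E there exists a global Carathéodory solution (Z, ξ) of the inclusion Ż_τ ∈ −(1/4)·G_λ(Z_τ) with Z_0 = z₀. -/

import Mathlib

/-!
Choose nearest points `a₁(z) ∈ Π_{A₁}(z)`, `a₂(z) ∈ Π_{A₂}(z)`; then
`f(z) = ((λ a₁(z) + (1 - λ) a₂(z)) - z) / 2` is a selection of `-¼ G_λ(z)`. The barycentres
`λ a₁ + (1 - λ) a₂` range over a compact set, so a large ball is invariant under every Euler step
of `f`, and the Euler polygons with steps `1 / (n + 1)` are uniformly Lipschitz. Their pointwise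
limit `Z` along an ultrafilter is Lipschitz, hence (Rademacher) differentiable a.e. and the
integral of its derivative.

The field `-¼ G_λ` has compact convex values (the convex hull of a compact set is compact in
finite dimension) and is upper semicontinuous, because nearest points are. So near `Z τ` all
Euler slopes lie in the closed convex `ε`-neighbourhood of `-¼ G_λ(Z τ)`, and so do the
difference quotients of the polygons, which are averages of such slopes. Passing to the limit,
first in `n` and then in the increment, puts `Ż τ` in every such neighbourhood, hence in
`-¼ G_λ(Z τ)`.
-/

open MeasureTheory Metric Filter Topology

/-- The set `Π_A(x)` of nearest points of `x` in `A`. -/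
def nearestPts {d : ℕ} (A : Set (EuclideanSpace ℝ (Fin d)))
    (x : EuclideanSpace ℝ (Fin d)) : Set (EuclideanSpace ℝ (Fin d)) :=
  {a ∈ A | ‖x - a‖ = Metric.infDist x A}

/-- The outer-Clarke field
`G_λ(z) = conv {2λ(z-a₁) + 2(1-λ)(z-a₂) : a₁ ∈ Π_{A₁}(z), a₂ ∈ Π_{A₂}(z)}`. -/
noncomputable def outerClarkeField {d : ℕ} (A₁ A₂ : Set (EuclideanSpace ℝ (Fin d))) (lam : ℝ)
    (z : EuclideanSpace ℝ (Fin d)) : Set (EuclideanSpace ℝ (Fin d)) :=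
  convexHull ℝ
    (Set.image2 (fun a₁ a₂ => (2 * lam) • (z - a₁) + (2 * (1 - lam)) • (z - a₂))
      (nearestPts A₁ z) (nearestPts A₂ z))

/-- `(Z, ξ)` is a global Carathéodory solution of `Ż_τ ∈ -(1/4)·G_λ(Z_τ)`:
`ξ` is locally integrable on `[0,∞)`, `ξ_τ ∈ -(1/4)·G_λ(Z_τ)` for a.e. `τ ≥ 0`,
and `Z_τ = Z_0 + ∫₀^τ ξ_s ds` for all `τ ≥ 0`. -/
def IsCaratheodorySolution {d : ℕ} (A₁ A₂ : Set (EuclideanSpace ℝ (Fin d))) (lam : ℝ)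
    (Z ξ : ℝ → EuclideanSpace ℝ (Fin d)) : Prop :=
  MeasureTheory.LocallyIntegrableOn ξ (Set.Ici 0) MeasureTheory.volume ∧
  (∀ᵐ τ ∂(MeasureTheory.volume.restrict (Set.Ici (0 : ℝ))),
    ξ τ ∈ (fun v => -(4 : ℝ)⁻¹ • v) '' outerClarkeField A₁ A₂ lam (Z τ)) ∧
  (∀ τ : ℝ, 0 ≤ τ → Z τ = Z 0 + ∫ s in (0 : ℝ)..τ, ξ s)

open Set
open scoped NNReal

theorem IsCompact.convexHull {E : Type*} [NormedAddCommGroup E] [NormedSpace ℝ E]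
    [FiniteDimensional ℝ E] {s : Set E} (hs : IsCompact s) : IsCompact (convexHull ℝ s) := by
  rcases s.eq_empty_or_nonempty with rfl | ⟨s₀, hs₀⟩
  · simp
  set N := Module.finrank ℝ E + 1
  set combo : (Fin N → ℝ) × (Fin N → E) → E := fun p => ∑ i, p.1 i • p.2 i
  -- Carathéodory: `N` points of `s` suffice for every point of the hull.
  suffices h : _root_.convexHull ℝ s = combo '' (stdSimplex ℝ (Fin N) ×ˢ univ.pi fun _ => s) by
    rw [h]
    exact ((isCompact_stdSimplex _ _).prod (isCompact_univ_pi fun _ => hs)).image (by fun_prop)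
  refine Subset.antisymm (fun x hx => ?_) ?_
  · obtain ⟨ι, _, z, w, hzs, hind, hw0, hw1, rfl⟩ := eq_pos_convex_span_of_mem_convexHull hx
    obtain ⟨e⟩ : Nonempty (ι ↪ Fin N) := Function.Embedding.nonempty_of_card_le <| by
      simpa using
        hind.card_le_finrank_succ.trans (Nat.add_le_add_right (Submodule.finrank_le _) 1)
    have hsum (g : ι → E) : ∑ j, Function.extend e g 0 j = ∑ i, g i := by
      simpa [tsum_fintype] using tsum_extend_zero e.injective g
    refine ⟨(Function.extend e w 0, Function.extend e z fun _ => s₀), ⟨⟨fun j => ?_, ?_⟩,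
      fun j _ => ?_⟩, ?_⟩
    · rcases range_extend_subset e w 0 ⟨j, rfl⟩ with ⟨i, hi⟩ | ⟨_, -, hi⟩ <;>
        dsimp only <;> rw [← hi]
      exacts [(hw0 i).le, le_rfl]
    · simpa [tsum_fintype, hw1] using tsum_extend_zero e.injective w
    · rcases range_extend_subset e z (fun _ => s₀) ⟨j, rfl⟩ with ⟨i, hi⟩ | ⟨_, -, hi⟩ <;>
        dsimp only <;> rw [← hi]
      exacts [hzs (mem_range_self i), hs₀]
    rw [← hsum]
    refine Finset.sum_congr rfl fun j _ => ?_
    by_cases hj : ∃ i, e i = j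
    · obtain ⟨i, rfl⟩ := hj
      simp [e.injective.extend_apply]
    · simp [Function.extend_apply' _ _ _ hj]
  · rintro - ⟨⟨w, z⟩, ⟨⟨hw0, hw1⟩, hz⟩, rfl⟩
    exact (convex_convexHull ℝ s).sum_mem (fun i _ => hw0 i) hw1
      fun i _ => subset_convexHull ℝ s (hz i (mem_univ i))

theorem LipschitzWith.integral_deriv_eq_sub {F : Type*} [NormedAddCommGroup F]
    [NormedSpace ℝ F] [FiniteDimensional ℝ F] {K : ℝ≥0} {Z : ℝ → F} (hZ : LipschitzWith K Z)
    (a b : ℝ) : ∫ s in a..b, deriv Z s = Z b - Z a := by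
  have hint : IntervalIntegrable (deriv Z) volume a b :=
    (intervalIntegrable_const (c := (K : ℝ))).mono_fun' (aestronglyMeasurable_deriv Z _)
      (ae_of_all _ fun _ => norm_deriv_le_of_lipschitz hZ)
  -- test against functionals `g`: `g ∘ Z` is real Lipschitz, hence absolutely continuous
  refine (SeparatingDual.eq_iff_forall_dual_eq (R := ℝ)).2 fun g => ?_
  have hgZ := (g.lipschitz.comp hZ).lipschitzOnWith.absolutelyContinuousOnInterval
    (a := a) (b := b)
  rw [← g.intervalIntegral_comp_comm hint, map_sub]
  refine .trans ?_ hgZ.integral_deriv_eq_sub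
  refine intervalIntegral.integral_congr_ae ?_
  filter_upwards [hZ.ae_differentiableAt_real] with s hs _
  exact (g.hasFDerivAt.comp_hasDerivAt s hs.hasDerivAt).deriv.symm

theorem LipschitzWith.locallyIntegrable_deriv {F : Type*} [NormedAddCommGroup F]
    [NormedSpace ℝ F] [CompleteSpace F] {K : ℝ≥0} {Z : ℝ → F} (hZ : LipschitzWith K Z) :
    LocallyIntegrable (deriv Z) :=
  (locallyIntegrable_const (K : ℝ)).mono (aestronglyMeasurable_deriv Z _)
    (ae_of_all _ fun _ => (norm_deriv_le_of_lipschitz hZ).trans (le_abs_self _))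

theorem exists_lipschitzWith_tendsto_ultrafilter {ι E : Type*} [MetricSpace E]
    [ProperSpace E] (U : Ultrafilter ι) {K : ℝ≥0} {Z : ι → ℝ → E}
    (hZ : ∀ n, LipschitzWith K (Z n)) {z₀ : E} (hZ₀ : ∀ n, Z n 0 = z₀) :
    ∃ Y : ℝ → E, LipschitzWith K Y ∧ Y 0 = z₀ ∧ ∀ τ, Tendsto (fun n => Z n τ) U (𝓝 (Y τ)) := by
  have hlim (τ : ℝ) : ∃ y, Tendsto (fun n => Z n τ) U (𝓝 y) := by
    obtain ⟨y, -, hy⟩ := (isCompact_closedBall z₀ (K * dist τ 0)).ultrafilter_le_nhds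
      (U.map fun n => Z n τ) <| le_principal_iff.2 <| Ultrafilter.mem_map.2 <|
        univ_mem' fun n => by simpa [hZ₀ n] using (hZ n).dist_le_mul τ 0
    exact ⟨y, hy⟩
  choose Y hY using hlim
  refine ⟨Y, LipschitzWith.of_dist_le_mul fun a b => ?_, tendsto_nhds_unique (hY 0) ?_, hY⟩
  · exact le_of_tendsto ((hY a).dist (hY b))
      (Eventually.of_forall fun n => (hZ n).dist_le_mul a b)
  · simp [hZ₀]

theorem HasDerivAt.mem_of_eventually_slope_mem {E : Type*} [NormedAddCommGroup E]
    [NormedSpace ℝ E] {Z : ℝ → E} {v : E} {τ : ℝ} (hZ : HasDerivAt Z v τ) {K : Set E}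
    (hK : IsClosed K) (h : ∀ᶠ t in 𝓝[>] 0, t⁻¹ • (Z (τ + t) - Z τ) ∈ K) : v ∈ K :=
  hK.mem_of_tendsto ((hasDerivAt_iff_tendsto_slope_zero.1 hZ).mono_left (nhdsGT_le_nhdsNE 0)) h

noncomputable section Euler

variable {E : Type*} [NormedAddCommGroup E] [NormedSpace ℝ E]

def eulerPoints (f : E → E) (h : ℝ) (z₀ : E) : ℕ → E
  | 0 => z₀
  | k + 1 => eulerPoints f h z₀ k + h • f (eulerPoints f h z₀ k)

-- For `s < 0`, `⌊s / h⌋₊ = 0`: the polygon continues backwards with slope `f z₀`.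
def eulerSlope (f : E → E) (h : ℝ) (z₀ : E) (s : ℝ) : E :=
  f (eulerPoints f h z₀ ⌊s / h⌋₊)

def eulerPolygon (f : E → E) (h : ℝ) (z₀ : E) (τ : ℝ) : E :=
  z₀ + ∫ s in (0 : ℝ)..τ, eulerSlope f h z₀ s

variable {f : E → E} {h : ℝ} {z₀ : E} {M : ℝ≥0}

theorem eulerPoints_mem {S : Set E} (hS : ∀ z ∈ S, z + h • f z ∈ S) (hz₀ : z₀ ∈ S) :
    ∀ k, eulerPoints f h z₀ k ∈ S
  | 0 => hz₀
  | k + 1 => hS _ (eulerPoints_mem hS hz₀ k)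

theorem stronglyMeasurable_eulerSlope : StronglyMeasurable (eulerSlope f h z₀) :=
  (StronglyMeasurable.of_discrete (f := fun k => f (eulerPoints f h z₀ k))).comp_measurable
    (Nat.measurable_floor.comp (measurable_id.div_const h))

theorem intervalIntegrable_eulerSlope (hM : ∀ k, ‖f (eulerPoints f h z₀ k)‖ ≤ M) (a b : ℝ) :
    IntervalIntegrable (eulerSlope f h z₀) volume a b :=
  (intervalIntegrable_const (c := (M : ℝ))).mono_fun'
    stronglyMeasurable_eulerSlope.aestronglyMeasurable (ae_of_all _ fun _ => hM _)

@[simp]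
theorem eulerPolygon_zero : eulerPolygon f h z₀ 0 = z₀ := by
  simp [eulerPolygon]

theorem eulerPolygon_sub_eulerPolygon (hM : ∀ k, ‖f (eulerPoints f h z₀ k)‖ ≤ M) (a b : ℝ) :
    eulerPolygon f h z₀ b - eulerPolygon f h z₀ a = ∫ s in a..b, eulerSlope f h z₀ s := by
  rw [eulerPolygon, eulerPolygon, add_sub_add_left_eq_sub,
    intervalIntegral.integral_interval_sub_left (intervalIntegrable_eulerSlope hM 0 b)
      (intervalIntegrable_eulerSlope hM 0 a)]

theorem lipschitzWith_eulerPolygon (hM : ∀ k, ‖f (eulerPoints f h z₀ k)‖ ≤ M) :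
    LipschitzWith M (eulerPolygon f h z₀) :=
  LipschitzWith.of_dist_le_mul fun a b => by
    rw [dist_eq_norm, eulerPolygon_sub_eulerPolygon hM, Real.dist_eq]
    exact intervalIntegral.norm_integral_le_of_norm_le_const fun s _ => hM ⌊s / h⌋₊

theorem eulerPolygon_natCast_mul [CompleteSpace E] (hh : 0 < h)
    (hM : ∀ k, ‖f (eulerPoints f h z₀ k)‖ ≤ M) (k : ℕ) :
    eulerPolygon f h z₀ (k * h) = eulerPoints f h z₀ k := by
  induction k with
  | zero => simp [eulerPoints]
  | succ k ih =>
    have hkh : (k : ℝ) * h ≤ (k + 1 : ℕ) * h := by gcongr; omega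
    have hslope : ∀ s ∈ Ioo ((k : ℝ) * h) ((k + 1 : ℕ) * h),
        eulerSlope f h z₀ s = f (eulerPoints f h z₀ k) := fun s hs => by
      rw [eulerSlope, Nat.floor_eq_on_Ico k (s / h)
        ⟨(le_div_iff₀ hh).2 hs.1.le, (div_lt_iff₀ hh).2 (by simpa using hs.2)⟩]
    have hstep : ∫ s in (k * h)..((k + 1 : ℕ) * h), eulerSlope f h z₀ s
        = h • f (eulerPoints f h z₀ k) := by
      rw [intervalIntegral.integral_of_le hkh, integral_Ioc_eq_integral_Ioo,
        setIntegral_congr_fun measurableSet_Ioo hslope, setIntegral_const,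
        Real.volume_real_Ioo_of_le hkh]
      congr 1
      push_cast
      ring
    have hsub := eulerPolygon_sub_eulerPolygon hM (k * h) ((k + 1 : ℕ) * h)
    rw [hstep, ih, sub_eq_iff_eq_add'] at hsub
    rw [hsub, eulerPoints]

theorem dist_eulerPoints_floor_le [CompleteSpace E] (hh : 0 < h)
    (hM : ∀ k, ‖f (eulerPoints f h z₀ k)‖ ≤ M) {s : ℝ} (hs : 0 ≤ s) :
    dist (eulerPoints f h z₀ ⌊s / h⌋₊) (eulerPolygon f h z₀ s) ≤ M * h := by
  rw [← eulerPolygon_natCast_mul hh hM]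
  refine ((lipschitzWith_eulerPolygon hM).dist_le_mul _ _).trans
    (mul_le_mul_of_nonneg_left ?_ M.2)
  have h₁ := (le_div_iff₀ hh).1 (Nat.floor_le (div_nonneg hs hh.le))
  have h₂ := (div_lt_iff₀ hh).1 (Nat.lt_floor_add_one (s / h))
  rw [Real.dist_eq, abs_sub_le_iff]
  constructor <;> linarith

theorem eulerPolygon_slope_mem [CompleteSpace E] (hh : 0 < h)
    (hM : ∀ k, ‖f (eulerPoints f h z₀ k)‖ ≤ M) {K : Set E} (hK : Convex ℝ K) (hKc : IsClosed K)
    {c : E} {r : ℝ} (hr : ∀ w ∈ ball c r, f w ∈ K) {τ t : ℝ} (hτ : 0 ≤ τ) (ht : 0 < t)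
    (hclose : dist (eulerPolygon f h z₀ τ) c + M * (h + t) < r) :
    t⁻¹ • (eulerPolygon f h z₀ (τ + t) - eulerPolygon f h z₀ τ) ∈ K := by
  have hmem : ∀ s ∈ Ioc τ (τ + t), eulerSlope f h z₀ s ∈ K := fun s hs => hr _ <| by
    have hsτ : dist (eulerPolygon f h z₀ s) (eulerPolygon f h z₀ τ) ≤ M * t := by
      refine ((lipschitzWith_eulerPolygon hM).dist_le_mul _ _).trans
        (mul_le_mul_of_nonneg_left ?_ M.2)
      rw [Real.dist_eq, abs_of_pos (by linarith [hs.1])]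
      linarith [hs.2]
    calc dist (eulerPoints f h z₀ ⌊s / h⌋₊) c
        ≤ dist (eulerPoints f h z₀ ⌊s / h⌋₊) (eulerPolygon f h z₀ s)
          + dist (eulerPolygon f h z₀ s) (eulerPolygon f h z₀ τ)
          + dist (eulerPolygon f h z₀ τ) c := dist_triangle4 _ _ _ _
      _ ≤ M * h + M * t + dist (eulerPolygon f h z₀ τ) c := by
        gcongr
        exact dist_eulerPoints_floor_le hh hM (hτ.trans hs.1.le)
      _ < r := by linarith
  have hav := hK.set_average_mem hKc (by simpa using ht) (by simp)
    (ae_restrict_of_forall_mem measurableSet_Ioc hmem)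
    (intervalIntegrable_eulerSlope hM τ (τ + t)).1
  rwa [← uIoc_of_le (by linarith), interval_average_eq,
    add_sub_cancel_left, ← eulerPolygon_sub_eulerPolygon hM] at hav

theorem exists_lipschitzWith_ae_deriv_mem [FiniteDimensional ℝ E] {Φ : E → Set E}
    (hΦ : ∀ z, Convex ℝ (Φ z)) (hΦc : ∀ z, IsClosed (Φ z)) {f : E → E}
    (hf : ∀ z, ∀ ε > 0, ∀ᶠ w in 𝓝 z, f w ∈ thickening ε (Φ z)) {S : Set E} {M : ℝ≥0}
    (hfS : ∀ z ∈ S, ‖f z‖ ≤ M) (hS : ∀ z ∈ S, ∀ h ∈ Ioc (0 : ℝ) 1, z + h • f z ∈ S)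
    {z₀ : E} (hz₀ : z₀ ∈ S) :
    ∃ Z : ℝ → E, LipschitzWith M Z ∧ Z 0 = z₀ ∧ ∀ᵐ τ, 0 ≤ τ → deriv Z τ ∈ Φ (Z τ) := by
  set step : ℕ → ℝ := fun n => 1 / ((n : ℝ) + 1)
  have hstep (n : ℕ) : step n ∈ Ioc 0 1 :=
    ⟨by positivity, (div_le_one (by positivity)).2 (by simp)⟩
  have hM (n k : ℕ) : ‖f (eulerPoints f (step n) z₀ k)‖ ≤ M :=
    hfS _ (eulerPoints_mem (fun z hz => hS z hz _ (hstep n)) hz₀ k)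
  let U := Ultrafilter.of (atTop : Filter ℕ)
  obtain ⟨Z, hZ, hZ₀, hlim⟩ := exists_lipschitzWith_tendsto_ultrafilter U
    (fun n => lipschitzWith_eulerPolygon (hM n)) (fun n => eulerPolygon_zero)
  refine ⟨Z, hZ, hZ₀, ?_⟩
  filter_upwards [hZ.ae_differentiableAt_real] with τ hτ hτ₀
  rw [← (hΦc _).closure_eq, closure_eq_iInter_cthickening]
  refine mem_iInter₂.2 fun ε hε =>
    hτ.hasDerivAt.mem_of_eventually_slope_mem isClosed_cthickening ?_
  obtain ⟨r, hr, hball⟩ := eventually_nhds_iff_ball.1 (hf (Z τ) ε hε)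
  set δ := r / (3 * (M + 1))
  have hδ : 0 < δ := by positivity
  have hMδ : (M + 1) * δ = r / 3 := by simp only [δ]; field_simp
  -- for small `t` and large `n`, the slopes of the `n`-th polygon on `[τ, τ + t]` are taken
  -- in the ball where `f` is `ε`-close to `Φ (Z τ)`
  filter_upwards [Ioo_mem_nhdsGT hδ] with t ht
  refine isClosed_cthickening.mem_of_tendsto (((hlim (τ + t)).sub (hlim τ)).const_smul t⁻¹) ?_
  have hU : Tendsto step U (𝓝 0) :=
    tendsto_one_div_add_atTop_nhds_zero_nat.mono_left (Ultrafilter.of_le _)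
  filter_upwards [hU.eventually (gt_mem_nhds hδ),
    (hlim τ).eventually (ball_mem_nhds _ (by positivity : 0 < r / 3))] with n hn hnτ
  refine eulerPolygon_slope_mem (hstep n).1 (hM n) ((hΦ _).cthickening ε) isClosed_cthickening
    (fun w hw => thickening_subset_cthickening _ _ (hball w hw)) hτ₀ ht.1 ?_
  have hn₀ := (hstep n).1
  nlinarith [ht.1, ht.2, M.2]

end Euler

section OuterClarke

variable {d : ℕ} {A A₁ A₂ : Set (EuclideanSpace ℝ (Fin d))}

theorem isCompact_nearestPts (hA : IsCompact A) (x : EuclideanSpace ℝ (Fin d)) :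
    IsCompact (nearestPts A x) :=
  hA.inter_right (isClosed_eq (by fun_prop) continuous_const)

theorem nearestPts_nonempty (hA : IsCompact A) (hne : A.Nonempty)
    (x : EuclideanSpace ℝ (Fin d)) : (nearestPts A x).Nonempty := by
  obtain ⟨a, ha, hdist⟩ := hA.exists_infDist_eq_dist hne x
  exact ⟨a, ha, by rw [← dist_eq_norm, hdist]⟩

theorem mem_nearestPts_of_tendsto {ι : Type*} {l : Filter ι} [l.NeBot] (hA : IsClosed A)
    {w a : ι → EuclideanSpace ℝ (Fin d)} {z b : EuclideanSpace ℝ (Fin d)}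
    (hw : Tendsto w l (𝓝 z)) (ha : Tendsto a l (𝓝 b)) (hmem : ∀ i, a i ∈ nearestPts A (w i)) :
    b ∈ nearestPts A z :=
  ⟨hA.mem_of_tendsto ha (Eventually.of_forall fun i => (hmem i).1),
    tendsto_nhds_unique (hw.sub ha).norm <|
      (((continuous_infDist_pt A).tendsto z).comp hw).congr fun i => ((hmem i).2).symm⟩

def clarkeVector {E : Type*} [AddCommGroup E] [Module ℝ E] (lam : ℝ) (z a₁ a₂ : E) : E :=
  (2 * lam) • (z - a₁) + (2 * (1 - lam)) • (z - a₂)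

theorem neg_inv_four_smul_clarkeVector {E : Type*} [AddCommGroup E] [Module ℝ E]
    (lam : ℝ) (z a₁ a₂ : E) :
    -(4 : ℝ)⁻¹ • clarkeVector lam z a₁ a₂ = (2 : ℝ)⁻¹ • (lam • a₁ + (1 - lam) • a₂ - z) := by
  unfold clarkeVector
  module

theorem isCompact_outerClarkeField (hA₁ : IsCompact A₁) (hA₂ : IsCompact A₂) (lam : ℝ)
    (z : EuclideanSpace ℝ (Fin d)) : IsCompact (outerClarkeField A₁ A₂ lam z) := by
  refine IsCompact.convexHull ?_
  rw [← image_prod]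
  exact ((isCompact_nearestPts hA₁ z).prod (isCompact_nearestPts hA₂ z)).image (by fun_prop)

theorem eventually_neg_inv_four_smul_clarkeVector_mem_thickening (hA₁ : IsCompact A₁)
    (hA₂ : IsCompact A₂) {a₁ a₂ : EuclideanSpace ℝ (Fin d) → EuclideanSpace ℝ (Fin d)}
    (ha₁ : ∀ w, a₁ w ∈ nearestPts A₁ w) (ha₂ : ∀ w, a₂ w ∈ nearestPts A₂ w) (lam : ℝ)
    (z : EuclideanSpace ℝ (Fin d)) {ε : ℝ} (hε : 0 < ε) :
    ∀ᶠ w in 𝓝 z, -(4 : ℝ)⁻¹ • clarkeVector lam w (a₁ w) (a₂ w) ∈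
      thickening ε ((fun v => -(4 : ℝ)⁻¹ • v) '' outerClarkeField A₁ A₂ lam z) := by
  by_contra hbad
  rw [not_eventually, frequently_iff_neBot] at hbad
  -- along an ultrafilter on the bad set, the selected nearest points converge to nearest points
  let U := Ultrafilter.of (𝓝 z ⊓ 𝓟 {w | -(4 : ℝ)⁻¹ • clarkeVector lam w (a₁ w) (a₂ w) ∉
      thickening ε ((fun v => -(4 : ℝ)⁻¹ • v) '' outerClarkeField A₁ A₂ lam z)})
  have hUz : Tendsto id (U : Filter _) (𝓝 z) := (Ultrafilter.of_le _).trans inf_le_left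
  obtain ⟨⟨α₁, α₂⟩, -, hα⟩ := (hA₁.prod hA₂).ultrafilter_le_nhds (U.map fun w => (a₁ w, a₂ w))
    (le_principal_iff.2 <| Ultrafilter.mem_map.2 <| univ_mem' fun w => ⟨(ha₁ w).1, (ha₂ w).1⟩)
  replace hα : Tendsto (fun w => (a₁ w, a₂ w)) U (𝓝 (α₁, α₂)) := by
    rwa [Ultrafilter.coe_map] at hα
  have hα₁ := (continuous_fst.tendsto _).comp hα
  have hα₂ := (continuous_snd.tendsto _).comp hα
  have hsel : Tendsto (fun w => -(4 : ℝ)⁻¹ • clarkeVector lam w (a₁ w) (a₂ w)) U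
      (𝓝 (-(4 : ℝ)⁻¹ • clarkeVector lam z α₁ α₂)) :=
    (((hUz.sub hα₁).const_smul _).add ((hUz.sub hα₂).const_smul _)).const_smul _
  have hmem : -(4 : ℝ)⁻¹ • clarkeVector lam z α₁ α₂ ∈
      thickening ε ((fun v => -(4 : ℝ)⁻¹ • v) '' outerClarkeField A₁ A₂ lam z) :=
    self_subset_thickening hε _ ⟨_, subset_convexHull ℝ _ (mem_image2_of_mem
      (mem_nearestPts_of_tendsto hA₁.isClosed hUz hα₁ ha₁)
      (mem_nearestPts_of_tendsto hA₂.isClosed hUz hα₂ ha₂)), rfl⟩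
  obtain ⟨w, hw, hw'⟩ := ((hsel.eventually (isOpen_thickening.mem_nhds hmem)).and
    (Ultrafilter.of_le _ (mem_inf_of_right (mem_principal_self _)))).exists
  exact hw' hw

theorem exists_lipschitzWith_ae_deriv_mem_outerClarkeField (hA₁ : A₁.Nonempty)
    (hA₂ : A₂.Nonempty) (hA₁cpt : IsCompact A₁) (hA₂cpt : IsCompact A₂) (lam : ℝ)
    (z₀ : EuclideanSpace ℝ (Fin d)) :
    ∃ (K : ℝ≥0) (Z : ℝ → EuclideanSpace ℝ (Fin d)), LipschitzWith K Z ∧ Z 0 = z₀ ∧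
      ∀ᵐ τ, 0 ≤ τ →
        deriv Z τ ∈ (fun v => -(4 : ℝ)⁻¹ • v) '' outerClarkeField A₁ A₂ lam (Z τ) := by
  choose a₁ ha₁ using nearestPts_nonempty hA₁cpt hA₁
  choose a₂ ha₂ using nearestPts_nonempty hA₂cpt hA₂
  obtain ⟨C, hC⟩ := (((hA₁cpt.prod hA₂cpt).image (by fun_prop :
    Continuous fun b : _ × _ => lam • b.1 + (1 - lam) • b.2)).isBounded).subset_closedBall 0
  set R := max ‖z₀‖ C
  have hcR (w) : lam • a₁ w + (1 - lam) • a₂ w ∈ closedBall 0 R :=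
    closedBall_subset_closedBall (le_max_right _ _)
      (hC ⟨(a₁ w, a₂ w), ⟨(ha₁ w).1, (ha₂ w).1⟩, rfl⟩)
  have hbound : ∀ z ∈ closedBall 0 R, ‖-(4 : ℝ)⁻¹ • clarkeVector lam z (a₁ z) (a₂ z)‖ ≤
      R.toNNReal := fun z hz => by
    rw [neg_inv_four_smul_clarkeVector, norm_smul, Real.coe_toNNReal _ (by positivity)]
    have := norm_sub_le (lam • a₁ z + (1 - lam) • a₂ z) z
    rw [mem_closedBall_zero_iff] at hz
    norm_num
    linarith [mem_closedBall_zero_iff.1 (hcR z)]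
  have hstep : ∀ z ∈ closedBall 0 R, ∀ h ∈ Ioc (0 : ℝ) 1,
      z + h • (-(4 : ℝ)⁻¹ • clarkeVector lam z (a₁ z) (a₂ z)) ∈ closedBall 0 R :=
    fun z hz h hh => by
      rw [neg_inv_four_smul_clarkeVector, smul_smul]
      exact (convex_closedBall _ _).add_smul_sub_mem hz (hcR z)
        ⟨by positivity [hh.1], by linarith [hh.2]⟩
  obtain ⟨Z, hZ, hZ₀, hderiv⟩ := exists_lipschitzWith_ae_deriv_mem
    (Φ := fun z => (fun v => -(4 : ℝ)⁻¹ • v) '' outerClarkeField A₁ A₂ lam z)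
    (fun z => (convex_convexHull ℝ _).smul _)
    (fun z => ((isCompact_outerClarkeField hA₁cpt hA₂cpt lam z).image
      (continuous_const_smul _)).isClosed)
    (fun z _ =>
      eventually_neg_inv_four_smul_clarkeVector_mem_thickening hA₁cpt hA₂cpt ha₁ ha₂ lam z)
    hbound hstep (by simp [R] : z₀ ∈ closedBall 0 R)
  exact ⟨_, Z, hZ, hZ₀, hderiv⟩

end OuterClarke

theorem existence_of_caratheodory_solution_general
    (d : ℕ)
    (A₁ A₂ : Set (EuclideanSpace ℝ (Fin d)))
    (hA₁ : A₁.Nonempty) (hA₂ : A₂.Nonempty)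
    (hA₁cpt : IsCompact A₁) (hA₂cpt : IsCompact A₂)
    (lam : ℝ)
    (z₀ : EuclideanSpace ℝ (Fin d)) :
    ∃ Z ξ : ℝ → EuclideanSpace ℝ (Fin d),
      IsCaratheodorySolution A₁ A₂ lam Z ξ ∧ Z 0 = z₀ := by
  obtain ⟨K, Z, hZ, hZ₀, hderiv⟩ :=
    exists_lipschitzWith_ae_deriv_mem_outerClarkeField hA₁ hA₂ hA₁cpt hA₂cpt lam z₀
  refine ⟨Z, deriv Z, ⟨hZ.locallyIntegrable_deriv.locallyIntegrableOn _,
    (ae_restrict_iff' measurableSet_Ici).2 hderiv, fun τ _ => ?_⟩, hZ₀⟩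
  rw [hZ.integral_deriv_eq_sub, add_sub_cancel]

theorem existence_of_caratheodory_solution
    (d : ℕ) (hd : 1 ≤ d)
    (A₁ A₂ : Set (EuclideanSpace ℝ (Fin d)))
    (hA₁ : A₁.Nonempty) (hA₂ : A₂.Nonempty)
    (hA₁cpt : IsCompact A₁) (hA₂cpt : IsCompact A₂)
    (lam : ℝ) (hlam : 0 ≤ lam)
    (z₀ : EuclideanSpace ℝ (Fin d)) :
    ∃ Z ξ : ℝ → EuclideanSpace ℝ (Fin d),
      IsCaratheodorySolution A₁ A₂ lam Z ξ ∧ Z 0 = z₀ :=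
  existence_of_caratheodory_solution_general d A₁ A₂ hA₁ hA₂ hA₁cpt hA₂cpt lam z₀
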